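/- Let K be an algebraically closed field containing a primitive n-th root of unity q, n ≥ 3, and let R = K[x,y,z]/(x^n - 1, y^n - 1, z² - n²z, (1-x)z). Then R is isomorphic as a K-algebra to K^{n(n+1)}. -/

import Mathlib

/-!
The zero locus of the relations consists of the `n(n+1)` distinct points
`(qᵃ, qᵇ, 0)` and `(1, qᵇ, n²)`, so evaluation at them maps the quotient onto `K^{n(n+1)}`
(distinct points have pairwise coprime maximal ideals, so the Chinese remainder theorem
applies). On the other hand the relations reduce every monomial to a multiple of some
`xᵃyᵇ` or `yᵇz` with `a, b < n`, so the quotient is spanned by `n(n+1)` elements and the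
surjection is an isomorphism.
-/

open MvPolynomial

theorem MvPolynomial.aeval_pi_surjective {K σ ι : Type*} [Field K] [Finite ι]
    {pts : ι → σ → K} (hpts : Function.Injective pts) :
    Function.Surjective (AlgHom.pi fun i => (aeval (pts i) : MvPolynomial σ K →ₐ[K] K)) := by
  have hmax : ∀ i, (RingHom.ker (aeval (R := K) (pts i))).IsMaximal := fun i =>
    RingHom.ker_isMaximal_of_surjective _ fun a => ⟨C a, by simp⟩
  have hne : Pairwise fun i j =>
      RingHom.ker (aeval (R := K) (pts i)) ≠ RingHom.ker (aeval (pts j)) := by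
    intro i j hij hker
    obtain ⟨m, hm⟩ := Function.ne_iff.mp (hpts.ne hij)
    have hmem : X m - C (pts i m) ∈ RingHom.ker (aeval (R := K) (pts i)) := by simp
    rw [hker, RingHom.mem_ker] at hmem
    exact hm (sub_eq_zero.mp (by simpa using hmem)).symm
  intro v
  obtain ⟨p, hp⟩ := Ideal.exists_forall_sub_mem_ideal
    (fun i j hij => Ideal.isCoprime_of_isMaximal (hne hij)) fun i => C (v i)
  refine ⟨p, ?_⟩
  ext i
  have hpi := hp i
  rw [RingHom.mem_ker, map_sub, aeval_C, sub_eq_zero] at hpi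
  exact hpi

theorem LinearMap.bijective_of_surjective_of_span_eq_top {K V W ι : Type*} [DivisionRing K]
    [AddCommGroup V] [Module K V] [AddCommGroup W] [Module K W] [Fintype ι]
    (f : V →ₗ[K] W) (hf : Function.Surjective f) {b : ι → V}
    (hb : Submodule.span K (Set.range b) = ⊤) (hW : Module.finrank K W = Fintype.card ι) :
    Function.Bijective f := by
  classical
  have : Module.Finite K V := ⟨⟨Finset.univ.image b, by simpa using hb⟩⟩
  have : Module.Finite K W := Module.Finite.of_surjective f hf
  have hV : Module.finrank K V ≤ Fintype.card ι := by
    rw [← finrank_top, ← hb]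
    exact finrank_range_le_card b
  have hle := LinearMap.finrank_range_le f
  rw [LinearMap.range_eq_top.mpr hf, finrank_top] at hle
  exact ⟨(LinearMap.injective_iff_surjective_of_finrank_eq_finrank (by omega)).mpr hf, hf⟩

theorem pow_succ_eq_pow_mul_of_sq_eq_mul {M : Type*} [CommMonoid M] {z a : M}
    (h : z ^ 2 = a * z) (c : ℕ) : z ^ (c + 1) = a ^ c * z := by
  induction c with
  | zero => simp
  | succ c ih => rw [pow_succ, ih, mul_assoc, ← sq, h, pow_succ]; ac_rfl

theorem pow_mul_eq_self_of_mul_eq_self {M : Type*} [Monoid M] {x z : M}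
    (h : x * z = z) (a : ℕ) : x ^ a * z = z := by
  induction a with
  | zero => simp
  | succ a ih => rw [pow_succ', mul_assoc, ih, h]

def relations (R : Type*) [CommRing R] (n : ℕ) : Set (MvPolynomial (Fin 3) R) :=
  {X 0 ^ n - 1, X 1 ^ n - 1, X 2 ^ 2 - (n : MvPolynomial (Fin 3) R) ^ 2 * X 2, (1 - X 0) * X 2}

section

variable {K : Type*} [Field K]

noncomputable def zeroLocusPoint (n : ℕ) (q : K) : Fin n × Fin n ⊕ Fin n → Fin 3 → K
  | .inl (a, b) => ![q ^ (a : ℕ), q ^ (b : ℕ), 0]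
  | .inr b => ![1, q ^ (b : ℕ), (n : K) ^ 2]

theorem zeroLocusPoint_injective {n : ℕ} [NeZero n] {q : K} (hq : IsPrimitiveRoot q n) :
    Function.Injective (zeroLocusPoint n q) := by
  have hn2 : (n : K) ^ 2 ≠ 0 := pow_ne_zero 2 hq.neZero'.out
  have hpow : ∀ a b : Fin n, q ^ (a : ℕ) = q ^ (b : ℕ) → a = b := fun a b h =>
    Fin.ext (hq.pow_inj a.isLt b.isLt h)
  rintro (⟨a, b⟩ | b) (⟨a', b'⟩ | b') h
  · have h0 := congrFun h 0
    have h1 := congrFun h 1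
    simp only [zeroLocusPoint, Matrix.cons_val_zero, Matrix.cons_val_one] at h0 h1
    rw [hpow a a' h0, hpow b b' h1]
  · exact absurd (congrFun h 2).symm (by simpa [zeroLocusPoint] using hn2)
  · exact absurd (congrFun h 2) (by simpa [zeroLocusPoint] using hn2)
  · have h1 := congrFun h 1
    simp only [zeroLocusPoint, Matrix.cons_val_one] at h1
    rw [hpow b b' h1]

theorem aeval_zeroLocusPoint_of_mem_relations {n : ℕ} {q : K} (hq : IsPrimitiveRoot q n)
    (i : Fin n × Fin n ⊕ Fin n) {g : MvPolynomial (Fin 3) K} (hg : g ∈ relations K n) :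
    aeval (zeroLocusPoint n q i) g = 0 := by
  have hqn : ∀ a : ℕ, (q ^ a) ^ n = 1 := fun a => by
    rw [← pow_mul', pow_mul, hq.pow_eq_one, one_pow]
  simp only [relations, Set.mem_insert_iff, Set.mem_singleton_iff] at hg
  rcases i with ⟨a, b⟩ | b <;> rcases hg with rfl | rfl | rfl | rfl <;>
    simp [zeroLocusPoint, hqn, ← sq]

end

def spanningMonomials {M : Type*} [Monoid M] (n : ℕ) (x y z : M) : Fin n × Fin n ⊕ Fin n → M
  | .inl (a, b) => x ^ (a : ℕ) * y ^ (b : ℕ)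
  | .inr b => y ^ (b : ℕ) * z

section

variable {K A : Type*} [Field K] [CommRing A] [Algebra K A]

theorem pow_mul_pow_mul_pow_mem_span_spanningMonomials {n : ℕ} [NeZero n] {x y z : A}
    (hx : x ^ n = 1) (hy : y ^ n = 1) (hz : z ^ 2 = (n : A) ^ 2 * z) (hxz : x * z = z)
    (a b c : ℕ) :
    x ^ a * y ^ b * z ^ c ∈ Submodule.span K (Set.range (spanningMonomials n x y z)) := by
  have hn : 0 < n := NeZero.pos n
  rcases c with _ | c
  · rw [pow_zero, mul_one, pow_eq_pow_mod a hx, pow_eq_pow_mod b hy]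
    exact Submodule.subset_span ⟨.inl (⟨a % n, Nat.mod_lt a hn⟩, ⟨b % n, Nat.mod_lt b hn⟩), rfl⟩
  · have hred : x ^ a * y ^ b * z ^ (c + 1) = ((n : K) ^ 2) ^ c • (y ^ (b % n) * z) := by
      rw [pow_succ_eq_pow_mul_of_sq_eq_mul hz, pow_eq_pow_mod b hy, Algebra.smul_def, map_pow,
        map_pow, map_natCast]
      linear_combination (y ^ (b % n) * ((n : A) ^ 2) ^ c) * pow_mul_eq_self_of_mul_eq_self hxz a
    rw [hred]
    exact Submodule.smul_mem _ _ (Submodule.subset_span ⟨.inr ⟨b % n, Nat.mod_lt b hn⟩, rfl⟩)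

theorem span_spanningMonomials_eq_top {n : ℕ} [NeZero n] {f : MvPolynomial (Fin 3) K →ₐ[K] A}
    (hf : Function.Surjective f) (hrel : ∀ g ∈ relations K n, f g = 0) :
    Submodule.span K (Set.range (spanningMonomials n (f (X 0)) (f (X 1)) (f (X 2)))) = ⊤ := by
  have hf_eq : ∀ g h, g - h ∈ relations K n → f g = f h := fun g h hgh =>
    sub_eq_zero.mp (by rw [← map_sub]; exact hrel _ hgh)
  have hx := hf_eq (X 0 ^ n) 1 (by simp [relations])
  have hy := hf_eq (X 1 ^ n) 1 (by simp [relations])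
  have hz := hf_eq (X 2 ^ 2) ((n : MvPolynomial (Fin 3) K) ^ 2 * X 2) (by simp [relations])
  have hxz := (hf_eq (X 2) (X 0 * X 2) (by simp [relations, sub_mul])).symm
  rw [map_pow, map_one] at hx hy
  rw [map_pow, map_mul, map_pow, map_natCast] at hz
  rw [map_mul] at hxz
  rw [Submodule.eq_top_iff']
  intro v
  obtain ⟨p, rfl⟩ := hf v
  induction p using MvPolynomial.induction_on' with
  | monomial u a =>
    rw [monomial_eq, Finsupp.prod_fintype _ _ fun i => pow_zero _, Fin.prod_univ_three,
      ← smul_eq_C_mul, map_smul, map_mul, map_mul, map_pow, map_pow, map_pow]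
    exact Submodule.smul_mem _ _ (pow_mul_pow_mul_pow_mem_span_spanningMonomials hx hy hz hxz _ _ _)
  | add p r hp hr => rw [map_add]; exact add_mem hp hr

end

theorem stmt_10_general (n : ℕ) (hn : 3 ≤ n) (K : Type*) [Field K]
    (q : K) (hq : IsPrimitiveRoot q n)
    (I : Ideal (MvPolynomial (Fin 3) K))
    (hI : I = Ideal.span
      { X 0 ^ n - 1, X 1 ^ n - 1, X 2 ^ 2 - (n : MvPolynomial (Fin 3) K) ^ 2 * X 2,
        (1 - X 0) * X 2 }) :
    Nonempty ((MvPolynomial (Fin 3) K ⧸ I) ≃ₐ[K] (Fin (n * (n + 1)) → K)) := by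
  have : NeZero n := ⟨by omega⟩
  change I = Ideal.span (relations K n) at hI
  let Φ : MvPolynomial (Fin 3) K →ₐ[K] (Fin n × Fin n ⊕ Fin n → K) :=
    AlgHom.pi fun i => aeval (zeroLocusPoint n q i)
  have hΦ : I ≤ RingHom.ker Φ := by
    rw [hI, Ideal.span_le]
    intro g hg
    ext i
    exact aeval_zeroLocusPoint_of_mem_relations hq i hg
  have hspan := span_spanningMonomials_eq_top (Ideal.Quotient.mkₐ_surjective K I)
    fun g hg => Ideal.Quotient.eq_zero_iff_mem.mpr (hI ▸ Ideal.subset_span hg)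
  have hbij := LinearMap.bijective_of_surjective_of_span_eq_top
    (Ideal.Quotient.liftₐ I Φ hΦ).toLinearMap
    (Ideal.Quotient.lift_surjective_of_surjective I hΦ
      (MvPolynomial.aeval_pi_surjective (zeroLocusPoint_injective hq)))
    hspan (Module.finrank_fintype_fun_eq_card K)
  have hcard : Fintype.card (Fin n × Fin n ⊕ Fin n) = n * (n + 1) := by
    simp only [Fintype.card_sum, Fintype.card_prod, Fintype.card_fin]
    ring
  exact ⟨(AlgEquiv.ofBijective _ hbij).trans
    (AlgEquiv.piCongrLeft K (fun _ => K) (Fintype.equivFinOfCardEq hcard))⟩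

/-- `K[x,y,z]/(xⁿ-1, yⁿ-1, z²-n²z, (1-x)z)` is isomorphic as a `K`-algebra to
`K^{n(n+1)}`, for `K` algebraically closed containing a primitive `n`-th root of
unity. This is the semisimple quotient `R_p(H_n(0,q))/J(R_p(H_n(0,q)))`. -/
theorem stmt_10 (n : ℕ) (hn : 3 ≤ n) (K : Type*) [Field K] [IsAlgClosed K]
    (q : K) (hq : IsPrimitiveRoot q n)
    (I : Ideal (MvPolynomial (Fin 3) K))
    (hI : I = Ideal.span
      { X 0 ^ n - 1, X 1 ^ n - 1, X 2 ^ 2 - (n : MvPolynomial (Fin 3) K) ^ 2 * X 2,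
        (1 - X 0) * X 2 }) :
    Nonempty ((MvPolynomial (Fin 3) K ⧸ I) ≃ₐ[K] (Fin (n * (n + 1)) → K)) :=
  stmt_10_general n hn K q hq I hI
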